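/- Basic size bound in the Unchaining FBC: if t is initial (closed and without explicit substitutions) and d : t ↦of* u, then |u|_b ≤ |d|_om − |d|_oec, where |d|_om and |d|_oec are the numbers of multiplicative and of chain exponential steps in d. In particular, |d|_oec ≤ |d|_om. -/

import Mathlib

/-- Terms with explicit substitutions (ES): t ::= x | a | λx.t | t u | t[x←u]. -/
inductive ETerm : Type
  | var : ℕ → ETerm
  | sym : ℕ → ETerm
  | lam : ℕ → ETerm → ETerm
  | app : ETerm → ETerm → ETerm
  | esub : ETerm → ℕ → ETerm → ETerm

/-- Free variables (symbols do not count; both λx and [x←·] bind x). -/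
def ETerm.fv : ETerm → Finset ℕ
  | .var x => {x}
  | .sym _ => ∅
  | .lam x t => ETerm.fv t \ {x}
  | .app t u => ETerm.fv t ∪ ETerm.fv u
  | .esub t x u => (ETerm.fv t \ {x}) ∪ ETerm.fv u

/-- A term is closed when it has no free variables. -/
def ETerm.Closed (t : ETerm) : Prop := ETerm.fv t = ∅

/-- Capture-avoiding substitution t{x:=u} (under the convention that bound
variables are renamed apart). -/
def ETerm.subst (x : ℕ) (u : ETerm) : ETerm → ETerm
  | .var y => if y = x then u else .var y
  | .sym a => .sym a
  | .lam y t => if y = x then .lam y t else .lam y (ETerm.subst x u t)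
  | .app t s => .app (ETerm.subst x u t) (ETerm.subst x u s)
  | .esub t y s => if y = x then .esub t y (ETerm.subst x u s)
                   else .esub (ETerm.subst x u t) y (ETerm.subst x u s)

/-- Terms without explicit substitutions. -/
def ETerm.NoES : ETerm → Prop
  | .var _ => True
  | .sym _ => True
  | .lam _ t => ETerm.NoES t
  | .app t u => ETerm.NoES t ∧ ETerm.NoES u
  | .esub _ _ _ => False

/-- Substitution contexts L ::= ⟨·⟩ | L[x←t]. -/
inductive SCtx : Type
  | hole : SCtx
  | sub : SCtx → ℕ → ETerm → SCtx

/-- Plugging a term in a substitution context. -/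
def SCtx.plug : SCtx → ETerm → ETerm
  | .hole, t => t
  | .sub L x u, t => ETerm.esub (SCtx.plug L t) x u

mutual
  /-- Inerts of the Explicit FBC: A ::= a | L⟨A⟩ L'⟨f⟩. -/
  inductive EInert : ETerm → Prop
    | sym : ∀ a : ℕ, EInert (ETerm.sym a)
    | app : ∀ (L L' : SCtx) (A f : ETerm), EInert A → EFireball f →
        EInert (ETerm.app (SCtx.plug L A) (SCtx.plug L' f))
  /-- Fireballs of the Explicit FBC: f ::= v | A, values v ::= λx.t. -/
  inductive EFireball : ETerm → Prop
    | val : ∀ (x : ℕ) (t : ETerm), EFireball (ETerm.lam x t)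
    | inert : ∀ t : ETerm, EInert t → EFireball t
end

/-- Shallow contexts S ::= ⟨·⟩ | S t | t S | S[x←t]. -/
inductive ShCtx : Type
  | hole : ShCtx
  | appL : ShCtx → ETerm → ShCtx
  | appR : ETerm → ShCtx → ShCtx
  | sub : ShCtx → ℕ → ETerm → ShCtx

/-- Plugging a term in a shallow context. -/
def ShCtx.plug : ShCtx → ETerm → ETerm
  | .hole, t => t
  | .appL S u, t => ETerm.app (ShCtx.plug S t) u
  | .appR u S, t => ETerm.app u (ShCtx.plug S t)
  | .sub S x u, t => ETerm.esub (ShCtx.plug S t) x u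

/-- Plugging a shallow context in a shallow context: `ShCtx.comp S C` is S⟨C⟩. -/
def ShCtx.comp : ShCtx → ShCtx → ShCtx
  | .hole, C => C
  | .appL S u, C => .appL (ShCtx.comp S C) u
  | .appR u S, C => .appR u (ShCtx.comp S C)
  | .sub S x u, C => .sub (ShCtx.comp S C) x u

/-- Substitution on shallow contexts, homomorphic, leaving the hole unchanged. -/
def ShCtx.substS (x : ℕ) (w : ETerm) : ShCtx → ShCtx
  | .hole => .hole
  | .appL S u => .appL (ShCtx.substS x w S) (ETerm.subst x w u)
  | .appR u S => .appR (ETerm.subst x w u) (ShCtx.substS x w S)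
  | .sub S y u => .sub (ShCtx.substS x w S) y (ETerm.subst x w u)

/-- The unfolding t↓ of an ES-term (the result contains no ES). -/
def unfoldE : ETerm → ETerm
  | .var x => .var x
  | .sym a => .sym a
  | .lam x t => .lam x (unfoldE t)
  | .app t u => .app (unfoldE t) (unfoldE u)
  | .esub t x u => ETerm.subst x (unfoldE u) (unfoldE t)

/-- Relative unfolding t↓_S of a term t with respect to a shallow context S. -/
def relUnf : ShCtx → ETerm → ETerm
  | .hole, t => unfoldE t
  | .appL S _, t => relUnf S t
  | .appR _ S, t => relUnf S t
  | .sub S x u, t => ETerm.subst x (unfoldE u) (relUnf S t)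

/-- Evaluable shallow contexts: ⟨·⟩ is evaluable; if S is evaluable and t↓ is a
fireball then S t is evaluable; if S is evaluable then t S is evaluable; if
S{x:=t↓} is evaluable and t↓ is a fireball then S[x←t] is evaluable. -/
inductive Evaluable : ShCtx → Prop
  | hole : Evaluable ShCtx.hole
  | appL : ∀ (S : ShCtx) (t : ETerm), Evaluable S → EFireball (unfoldE t) →
      Evaluable (ShCtx.appL S t)
  | appR : ∀ (S : ShCtx) (t : ETerm), Evaluable S → Evaluable (ShCtx.appR t S)
  | sub : ∀ (S : ShCtx) (x : ℕ) (t : ETerm),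
      Evaluable (ShCtx.substS x (unfoldE t) S) → EFireball (unfoldE t) →
      Evaluable (ShCtx.sub S x t)

/-- Substitution contexts are shallow contexts. -/
def SCtx.toSh : SCtx → ShCtx
  | .hole => .hole
  | .sub L x t => .sub (SCtx.toSh L) x t

/-- A shallow context is applicative when its hole is applied to a subterm,
i.e. S = S'⟨L u⟩. -/
def ApplicativeCtx (S : ShCtx) : Prop :=
  ∃ (S' : ShCtx) (L : SCtx) (u : ETerm),
    S = ShCtx.comp S' (ShCtx.appL (SCtx.toSh L) u)

/-- A shallow context is useful when it is evaluable and applicative. -/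
def Useful (S : ShCtx) : Prop := Evaluable S ∧ ApplicativeCtx S

/-- Identity contexts I ::= ⟨·⟩ | I⟨x⟩[x←I'] | I[x←t]. -/
inductive ICtx : Type
  | hole : ICtx
  | sub : ICtx → ℕ → ICtx → ICtx   -- I⟨x⟩[x←I'], the hole being that of I'
  | subT : ICtx → ℕ → ETerm → ICtx -- I[x←t]

/-- Plugging in an identity context. -/
def ICtx.plug : ICtx → ETerm → ETerm
  | .hole, t => t
  | .sub I x I', t => ETerm.esub (ICtx.plug I (ETerm.var x)) x (ICtx.plug I' t)
  | .subT I x u, t => ETerm.esub (ICtx.plug I t) x u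

/-- Chain contexts C ::= S⟨x⟩[x←I] | C⟨x⟩[x←I] | S⟨C⟩. -/
inductive CCtx : Type
  | base : ShCtx → ℕ → ICtx → CCtx   -- S⟨x⟩[x←I], the hole being that of I
  | cons : CCtx → ℕ → ICtx → CCtx    -- C⟨x⟩[x←I], the hole being that of I
  | under : ShCtx → CCtx → CCtx      -- S⟨C⟩

/-- Plugging in a chain context. -/
def CCtx.plug : CCtx → ETerm → ETerm
  | .base S x I, t => ETerm.esub (ShCtx.plug S (ETerm.var x)) x (ICtx.plug I t)
  | .cons C x I, t => ETerm.esub (CCtx.plug C (ETerm.var x)) x (ICtx.plug I t)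
  | .under S C, t => ShCtx.plug S (CCtx.plug C t)

/-- The chain-starting (shallow) context C↾x of a chain context C:
(S⟨y⟩[y←I])↾x := S[y←I⟨x⟩]; (C⟨y⟩[y←I])↾x := (C↾y)[y←I⟨x⟩]; (S⟨C⟩)↾x := S⟨C↾x⟩. -/
def CCtx.start : CCtx → ℕ → ShCtx
  | .base S y I, x => ShCtx.sub S y (ICtx.plug I (ETerm.var x))
  | .cons C y I, x => ShCtx.sub (CCtx.start C y) y (ICtx.plug I (ETerm.var x))
  | .under S C, x => ShCtx.comp S (CCtx.start C x)

/-- Multiplicative rule ↦om: S⟨L⟨λx.t⟩ u⟩ ↦om S⟨L⟨t[x←u]⟩⟩ if S⟨⟨·⟩ u⟩ is useful. -/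
inductive StepOM : ETerm → ETerm → Prop
  | fire : ∀ (S : ShCtx) (L : SCtx) (x : ℕ) (t u : ETerm),
      Useful (ShCtx.comp S (ShCtx.appL ShCtx.hole u)) →
      StepOM (ShCtx.plug S (ETerm.app (SCtx.plug L (ETerm.lam x t)) u))
             (ShCtx.plug S (SCtx.plug L (ETerm.esub t x u)))

/-- Shallow exponential rule ↦oes: S⟨S'⟨x⟩[x←L⟨v⟩]⟩ ↦oes S⟨L⟨S'⟨v⟩[x←v]⟩⟩ (v a value)
if S⟨S'[x←L⟨v⟩]⟩ is useful. -/
inductive StepOES : ETerm → ETerm → Prop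
  | fire : ∀ (S S' : ShCtx) (L : SCtx) (x y : ℕ) (s : ETerm),
      Useful (ShCtx.comp S (ShCtx.sub S' x (SCtx.plug L (ETerm.lam y s)))) →
      StepOES (ShCtx.plug S (ETerm.esub (ShCtx.plug S' (ETerm.var x)) x
                 (SCtx.plug L (ETerm.lam y s))))
              (ShCtx.plug S (SCtx.plug L (ETerm.esub (ShCtx.plug S' (ETerm.lam y s)) x
                 (ETerm.lam y s))))

/-- Chain exponential rule ↦oec: S⟨C⟨x⟩[x←L⟨v⟩]⟩ ↦oec S⟨L⟨C⟨v⟩[x←v]⟩⟩ (v a value)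
if S⟨(C↾x)[x←L⟨v⟩]⟩ is useful. -/
inductive StepOEC : ETerm → ETerm → Prop
  | fire : ∀ (S : ShCtx) (C : CCtx) (L : SCtx) (x y : ℕ) (s : ETerm),
      Useful (ShCtx.comp S (ShCtx.sub (CCtx.start C x) x (SCtx.plug L (ETerm.lam y s)))) →
      StepOEC (ShCtx.plug S (ETerm.esub (CCtx.plug C (ETerm.var x)) x
                 (SCtx.plug L (ETerm.lam y s))))
              (ShCtx.plug S (SCtx.plug L (ETerm.esub (CCtx.plug C (ETerm.lam y s)) x
                 (ETerm.lam y s))))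

/-- ↦of := ↦om ∪ ↦oes ∪ ↦oec. -/
def StepOF (t u : ETerm) : Prop := StepOM t u ∨ StepOES t u ∨ StepOEC t u

/-- `isVarSpine u` holds iff u has the form L⟨y⟩ for a substitution context L and
variable y. -/
def isVarSpine : ETerm → Bool
  | .var _ => true
  | .esub t _ _ => isVarSpine t
  | _ => false

/-- An explicit substitution t[x←u] is basic when u = L⟨y⟩; the basic size |t|_b
is the number of basic explicit substitutions in t. -/
def basicSize : ETerm → ℕ
  | .var _ => 0
  | .sym _ => 0
  | .lam _ t => basicSize t
  | .app t u => basicSize t + basicSize u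
  | .esub t _ u => basicSize t + basicSize u + (if isVarSpine u then 1 else 0)

/-- Derivations of the Unchaining FBC: `ODeriv m s c t u` means t ↦of* u with
exactly m multiplicative (↦om), s shallow exponential (↦oes) and c chain
exponential (↦oec) steps. -/
inductive ODeriv : ℕ → ℕ → ℕ → ETerm → ETerm → Prop
  | refl : ∀ t, ODeriv 0 0 0 t t
  | om : ∀ {t u w : ETerm} {m s c : ℕ},
      StepOM t u → ODeriv m s c u w → ODeriv (m+1) s c t w
  | oes : ∀ {t u w : ETerm} {m s c : ℕ},
      StepOES t u → ODeriv m s c u w → ODeriv m (s+1) c t w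
  | oec : ∀ {t u w : ETerm} {m s c : ℕ},
      StepOEC t u → ODeriv m s c u w → ODeriv m s (c+1) t w
/-! Every abstraction body stays ES-free along a derivation from an ES-free term, since the
abstractions met during evaluation are copies of those of the initial term. Hence every
substituted value has basic size 0 and is not a variable spine. A multiplicative step then
creates at most one basic substitution, a shallow exponential step creates none, and a chain
exponential step replaces the variable at the end of the chain by the value, so the basic
substitution `[y←I⟨x⟩]` that held it ceases to be basic. -/

def ETerm.LamBodiesNoES : ETerm → Prop
  | .var _ => True
  | .sym _ => True
  | .lam _ t => t.NoES
  | .app t u => t.LamBodiesNoES ∧ u.LamBodiesNoES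
  | .esub t _ u => t.LamBodiesNoES ∧ u.LamBodiesNoES

def SCtx.LamBodiesNoES : SCtx → Prop
  | .hole => True
  | .sub L _ u => L.LamBodiesNoES ∧ u.LamBodiesNoES

def ShCtx.LamBodiesNoES : ShCtx → Prop
  | .hole => True
  | .appL S u => S.LamBodiesNoES ∧ u.LamBodiesNoES
  | .appR u S => u.LamBodiesNoES ∧ S.LamBodiesNoES
  | .sub S _ u => S.LamBodiesNoES ∧ u.LamBodiesNoES

def ICtx.LamBodiesNoES : ICtx → Prop
  | .hole => True
  | .sub I _ I' => I.LamBodiesNoES ∧ I'.LamBodiesNoES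
  | .subT I _ u => I.LamBodiesNoES ∧ u.LamBodiesNoES

def CCtx.LamBodiesNoES : CCtx → Prop
  | .base S _ I => S.LamBodiesNoES ∧ I.LamBodiesNoES
  | .cons C _ I => C.LamBodiesNoES ∧ I.LamBodiesNoES
  | .under S C => S.LamBodiesNoES ∧ C.LamBodiesNoES

def SCtx.basicSize : SCtx → ℕ
  | .hole => 0
  | .sub L _ u => L.basicSize + _root_.basicSize u + (if isVarSpine u then 1 else 0)

def ShCtx.basicSize : ShCtx → ℕ
  | .hole => 0
  | .appL S u => S.basicSize + _root_.basicSize u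
  | .appR u S => _root_.basicSize u + S.basicSize
  | .sub S _ u => S.basicSize + _root_.basicSize u + (if isVarSpine u then 1 else 0)

namespace ETerm

theorem NoES.basicSize_eq_zero {t : ETerm} (h : t.NoES) : basicSize t = 0 := by
  induction t with
  | var _ | sym _ => rfl
  | lam _ t ih => exact ih h
  | app t u iht ihu => simp only [basicSize, iht h.1, ihu h.2]
  | esub => exact h.elim

theorem NoES.lamBodiesNoES {t : ETerm} (h : t.NoES) : t.LamBodiesNoES := by
  induction t with
  | var _ | sym _ => trivial
  | lam _ t _ => exact h
  | app t u iht ihu => exact ⟨iht h.1, ihu h.2⟩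
  | esub => exact h.elim

end ETerm

namespace SCtx

theorem lamBodiesNoES_plug (L : SCtx) (t : ETerm) :
    (L.plug t).LamBodiesNoES ↔ L.LamBodiesNoES ∧ t.LamBodiesNoES := by
  induction L with
  | hole => simp [plug, LamBodiesNoES]
  | sub L x u ih => simp only [plug, LamBodiesNoES, ETerm.LamBodiesNoES, ih]; tauto

theorem basicSize_plug (L : SCtx) (t : ETerm) :
    _root_.basicSize (L.plug t) = L.basicSize + _root_.basicSize t := by
  induction L with
  | hole => simp [plug, basicSize]
  | sub L x u ih => simp only [plug, basicSize, _root_.basicSize, ih]; omega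

theorem isVarSpine_plug (L : SCtx) (t : ETerm) : isVarSpine (L.plug t) = isVarSpine t := by
  induction L with
  | hole => rfl
  | sub L x u ih => exact ih

end SCtx

namespace ShCtx

theorem lamBodiesNoES_plug (S : ShCtx) (t : ETerm) :
    (S.plug t).LamBodiesNoES ↔ S.LamBodiesNoES ∧ t.LamBodiesNoES := by
  induction S with
  | hole => simp [plug, LamBodiesNoES]
  | appL S u ih | appR u S ih | sub S x u ih =>
    simp only [plug, LamBodiesNoES, ETerm.LamBodiesNoES, ih]; tauto

theorem basicSize_plug (S : ShCtx) (t : ETerm) :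
    _root_.basicSize (S.plug t) = S.basicSize + _root_.basicSize t := by
  induction S with
  | hole => simp [plug, basicSize]
  | appL S u ih | appR u S ih | sub S x u ih =>
    simp only [plug, basicSize, _root_.basicSize, ih]; omega

end ShCtx

namespace ICtx

theorem lamBodiesNoES_plug (I : ICtx) (t : ETerm) :
    (I.plug t).LamBodiesNoES ↔ I.LamBodiesNoES ∧ t.LamBodiesNoES := by
  induction I generalizing t with
  | hole => simp [plug, LamBodiesNoES]
  | sub I x I' ih ih' => simp only [plug, LamBodiesNoES, ETerm.LamBodiesNoES, ih, ih']; tauto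
  | subT I x u ih => simp only [plug, LamBodiesNoES, ETerm.LamBodiesNoES, ih]; tauto

theorem isVarSpine_plug_var (I : ICtx) (z : ℕ) : isVarSpine (I.plug (.var z)) = true := by
  induction I generalizing z with
  | hole => rfl
  | sub I x I' ih _ => exact ih x
  | subT I x u ih => exact ih z

/-- The `if` term accounts for the substitution `[·←I⟨·⟩]` in which the filled context sits
inside a chain. -/
theorem basicSize_plug_add_le {t : ETerm} (ht : basicSize t = 0) (hs : isVarSpine t = false)
    (I : ICtx) (z : ℕ) :
    basicSize (I.plug t) + (if isVarSpine (I.plug t) then 1 else 0)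
      ≤ basicSize (I.plug (.var z)) := by
  induction I generalizing z with
  | hole => simp [plug, basicSize, ht, hs]
  | sub I x I' _ ih' =>
    have := ih' z
    simp only [plug, basicSize, isVarSpine, isVarSpine_plug_var, if_true]
    omega
  | subT I x u ih =>
    have := ih z
    simp only [plug, basicSize, isVarSpine] at this ⊢
    omega

end ICtx

namespace CCtx

theorem lamBodiesNoES_plug (C : CCtx) (t : ETerm) :
    (C.plug t).LamBodiesNoES ↔ C.LamBodiesNoES ∧ t.LamBodiesNoES := by
  induction C generalizing t with
  | base S x I =>
    simp only [plug, LamBodiesNoES, ETerm.LamBodiesNoES, ShCtx.lamBodiesNoES_plug,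
      ICtx.lamBodiesNoES_plug]
    tauto
  | cons C x I ih =>
    simp only [plug, LamBodiesNoES, ETerm.LamBodiesNoES, ih, ICtx.lamBodiesNoES_plug]
    tauto
  | under S C ih => simp only [plug, LamBodiesNoES, ShCtx.lamBodiesNoES_plug, ih]; tauto

theorem basicSize_plug_lt {t : ETerm} (ht : basicSize t = 0) (hs : isVarSpine t = false)
    (C : CCtx) (z : ℕ) : basicSize (C.plug t) < basicSize (C.plug (.var z)) := by
  induction C generalizing z with
  | base S x I | cons C x I =>
    have := ICtx.basicSize_plug_add_le ht hs I z
    simp only [plug, basicSize, ICtx.isVarSpine_plug_var, if_true]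
    omega
  | under S C ih =>
    have := ih z
    simp only [plug, ShCtx.basicSize_plug]
    omega

end CCtx

namespace StepOM

variable {t u : ETerm}

theorem lamBodiesNoES (h : StepOM t u) (ht : t.LamBodiesNoES) : u.LamBodiesNoES := by
  obtain ⟨S, L, x, b, w, -⟩ := h
  simp only [ShCtx.lamBodiesNoES_plug, SCtx.lamBodiesNoES_plug, ETerm.LamBodiesNoES] at ht ⊢
  obtain ⟨hS, ⟨hL, hb⟩, hw⟩ := ht
  exact ⟨hS, hL, hb.lamBodiesNoES, hw⟩

theorem basicSize_le (h : StepOM t u) : basicSize u ≤ basicSize t + 1 := by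
  obtain ⟨S, L, x, b, w, -⟩ := h
  simp only [ShCtx.basicSize_plug, SCtx.basicSize_plug, basicSize]
  split <;> omega

end StepOM

namespace StepOES

variable {t u : ETerm}

theorem lamBodiesNoES (h : StepOES t u) (ht : t.LamBodiesNoES) : u.LamBodiesNoES := by
  obtain ⟨S, S', L, x, y, b, -⟩ := h
  simp only [ShCtx.lamBodiesNoES_plug, SCtx.lamBodiesNoES_plug, ETerm.LamBodiesNoES] at ht ⊢
  obtain ⟨hS, ⟨hS', -⟩, hL, hb⟩ := ht
  exact ⟨hS, hL, ⟨hS', hb⟩, hb⟩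

theorem basicSize_le (h : StepOES t u) (ht : t.LamBodiesNoES) : basicSize u ≤ basicSize t := by
  obtain ⟨S, S', L, x, y, b, -⟩ := h
  simp only [ShCtx.lamBodiesNoES_plug, SCtx.lamBodiesNoES_plug, ETerm.LamBodiesNoES] at ht
  have hb : basicSize b = 0 := ht.2.2.2.basicSize_eq_zero
  simp only [ShCtx.basicSize_plug, SCtx.basicSize_plug, SCtx.isVarSpine_plug, basicSize,
    isVarSpine, hb, Bool.false_eq_true, if_false]
  omega

end StepOES

namespace StepOEC

variable {t u : ETerm}

theorem lamBodiesNoES (h : StepOEC t u) (ht : t.LamBodiesNoES) : u.LamBodiesNoES := by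
  obtain ⟨S, C, L, x, y, b, -⟩ := h
  simp only [ShCtx.lamBodiesNoES_plug, SCtx.lamBodiesNoES_plug, CCtx.lamBodiesNoES_plug,
    ETerm.LamBodiesNoES] at ht ⊢
  obtain ⟨hS, ⟨hC, -⟩, hL, hb⟩ := ht
  exact ⟨hS, hL, ⟨hC, hb⟩, hb⟩

theorem basicSize_lt (h : StepOEC t u) (ht : t.LamBodiesNoES) : basicSize u < basicSize t := by
  obtain ⟨S, C, L, x, y, b, -⟩ := h
  simp only [ShCtx.lamBodiesNoES_plug, SCtx.lamBodiesNoES_plug, ETerm.LamBodiesNoES] at ht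
  have hb : basicSize (.lam y b) = 0 := ht.2.2.2.basicSize_eq_zero
  have hchain := CCtx.basicSize_plug_lt hb rfl C x
  simp only [ShCtx.basicSize_plug, SCtx.basicSize_plug, SCtx.isVarSpine_plug, basicSize,
    isVarSpine, Bool.false_eq_true, if_false] at hb hchain ⊢
  omega

end StepOEC

theorem ODeriv.basicSize_add_le {m s c : ℕ} {t u : ETerm} (d : ODeriv m s c t u)
    (ht : t.LamBodiesNoES) : basicSize u + c ≤ basicSize t + m := by
  induction d with
  | refl => omega
  | om h _ ih => have := h.basicSize_le; have := ih (h.lamBodiesNoES ht); omega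
  | oes h _ ih => have := h.basicSize_le ht; have := ih (h.lamBodiesNoES ht); omega
  | oec h _ ih => have := h.basicSize_lt ht; have := ih (h.lamBodiesNoES ht); omega

/-- basic size bound in the Unchaining FBC: if t is initial (closed
and without ES) and d : t ↦of* u, then |u|_b ≤ |d|_om − |d|_oec (stated over ℕ as
|u|_b + |d|_oec ≤ |d|_om); in particular |d|_oec ≤ |d|_om. -/
theorem basic_size_bound (t u : ETerm) (m s c : ℕ)
    (hc : ETerm.Closed t) (hno : ETerm.NoES t) (d : ODeriv m s c t u) :
    basicSize u + c ≤ m ∧ c ≤ m := by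
  have hbound := d.basicSize_add_le hno.lamBodiesNoES
  rw [hno.basicSize_eq_zero] at hbound
  exact ⟨by omega, by omega⟩
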